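/- Let Y ⊆ [0,1] be compact and countable, X = Y × {0,1} ⊆ [0,1]² with the Euclidean metric, and define rk(y) as the Cantor–Bendixson rank of y in Y (the least β with y ∉ Y^{β+1}). Define f : X → X by f(y,i) = (y,i) if rk(y) is even and f(y,i) = (y,1−i) if rk(y) is odd. Suppose that every point y ∈ Y¹ is the limit of a sequence of distinct points yₙ ∈ Y with rk(yₙ) < rk(y) and rk(yₙ) of parity opposite to rk(y). Then for every 0 < ε < 1, the oscillation derivative X¹_{ε,f} equals the Cantor–Bendixson derivative X¹ of X. -/

import Mathlib

open Filter
open scoped ENNReal NNReal Topology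

/-- The Cantor–Bendixson derivative of a set: its limit (accumulation) points lying in it. -/
def cbDeriv {Z : Type*} [TopologicalSpace Z] (A : Set Z) : Set Z :=
  {x ∈ A | AccPt x (𝓟 A)}

/-- Transfinite iterates of the Cantor–Bendixson derivative starting from `A`. -/
noncomputable def cbIterFrom {Z : Type} [TopologicalSpace Z] (A : Set Z) (o : Ordinal.{0}) :
    Set Z :=
  Ordinal.limitRecOn o A (fun _ ih => cbDeriv ih)
    (fun o _ ih => ⋂ (b : {β : Ordinal.{0} // β < o}), ih b.1 b.2)

/-- The Cantor–Bendixson rank of a point `y` in `Y`: the least `β` with `y ∉ Y^(β+1)`. -/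
noncomputable def rkIn (Y : Set ℝ) (y : ℝ) : Ordinal.{0} :=
  sInf {β : Ordinal.{0} | y ∉ cbIterFrom Y (β + 1)}

/-- The oscillation of `f` at `x`. -/
noncomputable def osc {Z : Type*} [MetricSpace Z] (f : Z → Z) (x : Z) : ℝ≥0∞ :=
  ⨅ (V : Set Z) (_ : IsOpen V) (_ : x ∈ V), EMetric.diam (f '' V)

/-!
If `x = (y, i)` is isolated in `X`, the singleton `{x}` is open and the oscillation of any map
at `x` is `0`. Otherwise `y` is a limit point of `Y` (near `x` the second coordinate is
constant), so by hypothesis `y` is a limit of points `yₙ ∈ Y` whose rank has the other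
parity. Then `(yₙ, i) → x`, and exactly one of `x`, `(yₙ, i)` has its second coordinate
flipped by `f`, so `f x` and `f (yₙ, i)` lie on different lines and are at distance `≥ 1`.
-/

local notation "ℝ²" => EuclideanSpace ℝ (Fin 2)

lemma Ordinal.mod_two_eq_zero_or_one (o : Ordinal) : o % 2 = 0 ∨ o % 2 = 1 :=
  Order.le_one_iff.mp (Order.lt_succ_iff.mp (by simpa using Ordinal.mod_lt o two_ne_zero))

lemma Ordinal.mod_two_eq_zero_and_ne_or {a b : Ordinal} (h : a % 2 ≠ b % 2) :
    a % 2 = 0 ∧ b % 2 ≠ 0 ∨ a % 2 ≠ 0 ∧ b % 2 = 0 := by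
  rcases a.mod_two_eq_zero_or_one with ha | ha <;> rcases b.mod_two_eq_zero_or_one with hb | hb <;>
    simp_all

section Oscillation

variable {Z : Type*} [MetricSpace Z] {f : Z → Z} {x : Z}

lemma osc_eq_zero_of_nhdsNE_eq_bot (hx : 𝓝[≠] x = ⊥) : osc f x = 0 := by
  refine le_zero_iff.mp ((iInf₂_le {x} ((isOpen_singleton_iff_punctured_nhds x).mpr hx)).trans
    (iInf_le_of_le rfl ?_))
  rw [Set.image_singleton]
  exact Metric.ediam_singleton.le

lemma le_osc_of_frequently {c : ℝ≥0∞} (h : ∃ᶠ z in 𝓝 x, c ≤ edist (f x) (f z)) :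
    c ≤ osc f x := by
  refine le_iInf₂ fun V hV => le_iInf fun hxV => ?_
  obtain ⟨z, hc, hzV⟩ := (h.and_eventually (hV.mem_nhds hxV)).exists
  exact hc.trans
    (Metric.edist_le_ediam_of_mem (Set.mem_image_of_mem f hxV) (Set.mem_image_of_mem f hzV))

end Oscillation

lemma one_le_dist_of_ne {a b : ℝ} (ha : a = 0 ∨ a = 1) (hb : b = 0 ∨ b = 1) (hab : a ≠ b) :
    1 ≤ dist a b := by
  rcases ha with rfl | rfl <;> rcases hb with rfl | rfl <;> norm_num [Real.dist_eq] at *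

lemma EuclideanSpace.eq_of_apply_zero_of_apply_one {p q : ℝ²} (h0 : p 0 = q 0)
    (h1 : p 1 = q 1) : p = q :=
  PiLp.ext (Fin.forall_fin_two.mpr ⟨h0, h1⟩)

section TwoLines

variable {X : Set ℝ²} (hX : ∀ p ∈ X, p 1 = 0 ∨ p 1 = 1)
include hX

lemma eventually_apply_one_eq (x : X) : ∀ᶠ z : X in 𝓝 x, (z : ℝ²) 1 = (x : ℝ²) 1 := by
  have hcont : Continuous fun z : X => (z : ℝ²) 1 := by fun_prop
  filter_upwards [Metric.tendsto_nhds.mp (hcont.tendsto x) 1 one_pos] with z hz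
  by_contra hne
  exact (one_le_dist_of_ne (hX _ z.2) (hX _ x.2) hne).not_gt hz

lemma accPt_apply_zero {Y : Set ℝ} (hY : ∀ p ∈ X, p 0 ∈ Y) {x : X} (hx : (𝓝[≠] x).NeBot) :
    AccPt ((x : ℝ²) 0) (𝓟 Y) := by
  have hcont : Continuous fun z : X => (z : ℝ²) 0 := by fun_prop
  have hfreq : ∃ᶠ z in 𝓝 x, z ≠ x := frequently_iff_neBot.mpr hx
  refine accPt_iff_frequently.mpr ((hcont.tendsto x).frequently ?_)
  refine (hfreq.and_eventually (eventually_apply_one_eq hX x)).mono fun z ⟨hne, h1⟩ =>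
    ⟨fun h0 => hne (Subtype.ext ?_), hY _ z.2⟩
  exact EuclideanSpace.eq_of_apply_zero_of_apply_one h0 h1

lemma one_le_edist_of_mod_two_ne {r : ℝ → Ordinal} {f : X → X}
    (hf : ∀ x : X, (r ((x : ℝ²) 0) % 2 = 0 → f x = x) ∧
      (r ((x : ℝ²) 0) % 2 ≠ 0 → (f x : ℝ²) 0 = (x : ℝ²) 0 ∧ (f x : ℝ²) 1 = 1 - (x : ℝ²) 1))
    {x p : X} (h1 : (p : ℝ²) 1 = (x : ℝ²) 1) (hr : r ((p : ℝ²) 0) % 2 ≠ r ((x : ℝ²) 0) % 2) :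
    1 ≤ edist (f x) (f p) := by
  have hne : (f x : ℝ²) 1 ≠ (f p : ℝ²) 1 := by
    have hx1 : (x : ℝ²) 1 ≠ 1 - (x : ℝ²) 1 := by
      rcases hX _ x.2 with h | h <;> rw [h] <;> norm_num
    rcases Ordinal.mod_two_eq_zero_and_ne_or hr with ⟨hp, hx⟩ | ⟨hp, hx⟩
    · rw [((hf x).2 hx).2, (hf p).1 hp, h1]
      exact hx1.symm
    · rw [(hf x).1 hx, ((hf p).2 hp).2, h1]
      exact hx1
  rw [edist_dist, ENNReal.one_le_ofReal]
  exact (one_le_dist_of_ne (hX _ (f x).2) (hX _ (f p).2) hne).trans (PiLp.dist_apply_le _ _ 1)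

end TwoLines

theorem stmt18_general (Y : Set ℝ)
    (X : Set (EuclideanSpace ℝ (Fin 2)))
    (hX : X = {p : EuclideanSpace ℝ (Fin 2) | p 0 ∈ Y ∧ (p 1 = 0 ∨ p 1 = 1)})
    (f : X → X)
    (hf : ∀ x : X,
      (rkIn Y ((x : EuclideanSpace ℝ (Fin 2)) 0) % 2 = 0 → f x = x) ∧
      (rkIn Y ((x : EuclideanSpace ℝ (Fin 2)) 0) % 2 ≠ 0 →
        (f x : EuclideanSpace ℝ (Fin 2)) 0 = (x : EuclideanSpace ℝ (Fin 2)) 0 ∧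
        (f x : EuclideanSpace ℝ (Fin 2)) 1 = 1 - (x : EuclideanSpace ℝ (Fin 2)) 1))
    (happrox : ∀ y ∈ cbDeriv Y, ∃ g : ℕ → ℝ, Function.Injective g ∧ (∀ n, g n ∈ Y) ∧
      Tendsto g atTop (𝓝 y) ∧
      ∀ n, rkIn Y (g n) < rkIn Y y ∧ rkIn Y (g n) % 2 ≠ rkIn Y y % 2)
    (ε : ℝ≥0) (hε0 : 0 < ε) (hε1 : ε < 1) :
    {x : X | (ε : ℝ≥0∞) ≤ osc f x} = {x : X | (𝓝[≠] x).NeBot} := by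
  have hmem := Set.ext_iff.mp hX
  have hlines : ∀ p ∈ X, p 1 = 0 ∨ p 1 = 1 := fun p hp => ((hmem p).mp hp).2
  ext x
  refine ⟨fun hosc => ?_, fun hx => ?_⟩
  · by_contra hiso
    rw [Set.mem_ofPred_eq, osc_eq_zero_of_nhdsNE_eq_bot (not_neBot.mp hiso)] at hosc
    exact hε0.ne' (by exact_mod_cast le_zero_iff.mp hosc)
  · obtain ⟨g, -, hgY, hg, hrk⟩ := happrox _
      ⟨((hmem x).mp x.2).1, accPt_apply_zero hlines (fun p hp => ((hmem p).mp hp).1) hx⟩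
    set c := (x : EuclideanSpace ℝ (Fin 2)) 1
    let p : ℕ → X := fun n => ⟨!₂[g n, c], (hmem _).mpr ⟨hgY n, hlines x x.2⟩⟩
    have hp : Tendsto p atTop (𝓝 x) := by
      have hcont : Continuous fun y : ℝ => !₂[y, c] := by fun_prop
      refine tendsto_subtype_rng.mpr ?_
      have hxc : !₂[(x : EuclideanSpace ℝ (Fin 2)) 0, c] = x :=
        EuclideanSpace.eq_of_apply_zero_of_apply_one rfl rfl
      exact hxc ▸ (hcont.tendsto _).comp hg
    refine le_osc_of_frequently (hp.frequently (Frequently.of_forall fun n => ?_))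
    exact (by exact_mod_cast hε1.le : (ε : ℝ≥0∞) ≤ 1).trans
      (one_le_edist_of_mod_two_ne hlines hf rfl (hrk n).2)

/-- Let `Y ⊆ [0,1]` be compact and countable, `X = Y × {0,1} ⊆ ℝ²` with the Euclidean
metric, and let `f` fix `(y,i)` when `rk y` is even and flip the second coordinate when
`rk y` is odd (parity of an ordinal `β + n` being the parity of `n`, i.e. `· % 2`).
If every `y ∈ Y¹` is a limit of distinct points of strictly smaller rank of opposite
parity, then for every `0 < ε < 1` the oscillation derivative `X¹_{ε,f}` equals the
Cantor–Bendixson derivative `X¹` (the set of limit points of `X`). -/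
theorem stmt18 (Y : Set ℝ) (hYsub : Y ⊆ Set.Icc 0 1) (hYcomp : IsCompact Y)
    (hYcount : Y.Countable)
    (X : Set (EuclideanSpace ℝ (Fin 2)))
    (hX : X = {p : EuclideanSpace ℝ (Fin 2) | p 0 ∈ Y ∧ (p 1 = 0 ∨ p 1 = 1)})
    (f : X → X)
    (hf : ∀ x : X,
      (rkIn Y ((x : EuclideanSpace ℝ (Fin 2)) 0) % 2 = 0 → f x = x) ∧
      (rkIn Y ((x : EuclideanSpace ℝ (Fin 2)) 0) % 2 ≠ 0 →
        (f x : EuclideanSpace ℝ (Fin 2)) 0 = (x : EuclideanSpace ℝ (Fin 2)) 0 ∧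
        (f x : EuclideanSpace ℝ (Fin 2)) 1 = 1 - (x : EuclideanSpace ℝ (Fin 2)) 1))
    (happrox : ∀ y ∈ cbDeriv Y, ∃ g : ℕ → ℝ, Function.Injective g ∧ (∀ n, g n ∈ Y) ∧
      Tendsto g atTop (𝓝 y) ∧
      ∀ n, rkIn Y (g n) < rkIn Y y ∧ rkIn Y (g n) % 2 ≠ rkIn Y y % 2)
    (ε : ℝ≥0) (hε0 : 0 < ε) (hε1 : ε < 1) :
    {x : X | (ε : ℝ≥0∞) ≤ osc f x} = {x : X | (𝓝[≠] x).NeBot} :=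
  stmt18_general Y X hX f hf happrox ε hε0 hε1
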